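/- arXiv:1901.10179 — 2 statements merged into one kernel-verified Lean document; each statement's English description precedes it below -/
import Mathlib

section
/- For every integer v ≥ 6, a (2,3,v)-halving exists if and only if v ≡ 2 (mod 4). -/
/-- A `T(2,3,v)` trade: `f B = 0` unless `|B| = 3`, and every pair is balanced. -/
def isTrade (v : ℕ) (f : Finset (Fin v) → ℤ) : Prop :=
  (∀ B : Finset (Fin v), B.card ≠ 3 → f B = 0) ∧
  ∀ P : Finset (Fin v), P.card = 2 →
    ∑ B ∈ Finset.univ.filter (fun B : Finset (Fin v) => B.card = 3 ∧ P ⊆ B), f B = 0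

/-- A trade is simple if every value lies in `{-1, 0, 1}`. -/
def isSimple (v : ℕ) (f : Finset (Fin v) → ℤ) : Prop :=
  ∀ B : Finset (Fin v), f B = -1 ∨ f B = 0 ∨ f B = 1

/-- The volume of a trade: the sum of its positive entries. -/
def volume (v : ℕ) (f : Finset (Fin v) → ℤ) : ℤ :=
  ∑ B : Finset (Fin v), max (f B) 0

/-- A `(2,3,v)`-halving: a simple trade taking value `±1` on every 3-subset. -/
def isHalving (v : ℕ) (f : Finset (Fin v) → ℤ) : Prop :=
  isTrade v f ∧ isSimple v f ∧
    ∀ B : Finset (Fin v), B.card = 3 → f B = 1 ∨ f B = -1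

/-- The minimal trade `(a₀ a₁ a₂ ; b₀ b₁ b₂)`: it sends each of the eight sets
`{c₀,c₁,c₂}` with `cᵢ ∈ {aᵢ, bᵢ}` to `(-1)^(#{i : cᵢ = bᵢ})` and all other sets to 0. -/
def minimalTrade (v : ℕ) (a b : Fin 3 → Fin v) : Finset (Fin v) → ℤ :=
  fun B => ∑ s : Fin 3 → Bool,
    (-1 : ℤ) ^ (Finset.univ.filter (fun i => s i = true)).card *
      (if B = Finset.image (fun i => if s i then b i else a i) Finset.univ then 1 else 0)

/-- The directed-edge trade `E(i,j) = 1_{{aᵢ,bᵢ,aⱼ}} + 1_{{aᵢ,bᵢ,bⱼ}} - 1_{{aⱼ,bⱼ,aᵢ}} - 1_{{aⱼ,bⱼ,bᵢ}}`. -/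
def edgeTrade (v : ℕ) {ι : Type*} (a b : ι → Fin v) (i j : ι) : Finset (Fin v) → ℤ :=
  fun B => (if B = {a i, b i, a j} then 1 else 0) + (if B = {a i, b i, b j} then 1 else 0)
    - (if B = {a j, b j, a i} then 1 else 0) - (if B = {a j, b j, b i} then 1 else 0)

/-! In a halving each pair `{x, y}` lies in `v - 2` triples, half of them positive, so `v` is
even and, for a fixed point `x`, the positive triples through `x` form a `(v - 2) / 2`-regular
graph on the other `v - 1` points. Since `v - 1` is odd, the handshake lemma forces `(v - 2) / 2`
to be even, i.e. `v ≡ 2 (mod 4)`.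

Conversely, for `v = 2m` with `m` odd, take the points to be `Bool × ZMod m` (a parity and a
label). A triple with `k` odd points gets the sign `(-1)^k`, flipped when `k = 1` and the odd label
is the sum of the even labels, or when `k = 2` and the odd labels add up to four times the even
label. As `2` is invertible modulo `m`, through every pair exactly one flipped triple lies in each
parity class where the flip matters, and the pair sums cancel. -/

open Finset

section Signings

variable {α V : Type*} [Fintype V] [DecidableEq V]

lemma two_mul_card_filter_eq_one {s : Finset α} {g : α → ℤ}
    (hg : ∀ z ∈ s, g z = 1 ∨ g z = -1) (hsum : ∑ z ∈ s, g z = 0) :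
    2 * #(s.filter (g · = 1)) = #s := by
  have hsplit : ∑ z ∈ s, g z = ∑ z ∈ s, (2 * (if g z = 1 then 1 else 0) - 1) :=
    sum_congr rfl fun z hz => by rcases hg z hz with h | h <;> simp [h]
  rw [hsplit, sum_sub_distrib, ← mul_sum, sum_boole, sum_const, nsmul_one] at hsum
  omega

lemma sum_filter_card_eq_card_add_one_superset (f : Finset V → ℤ) (P : Finset V) :
    ∑ B ∈ univ.filter (fun B : Finset V => #B = #P + 1 ∧ P ⊆ B), f B
      = ∑ z ∈ Pᶜ, f (insert z P) := by
  have himage : univ.filter (fun B : Finset V => #B = #P + 1 ∧ P ⊆ B)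
      = Pᶜ.image (insert · P) := by
    ext B
    simp only [mem_filter, mem_univ, true_and, mem_image, mem_compl, exists_eq_insert_iff]
    tauto
  rw [himage, sum_image fun z hz z' _ => (insert_inj (mem_compl.mp hz)).mp]

def IsBalancedSigning (H : Finset V → ℤ) : Prop :=
  (∀ B : Finset V, #B = 3 → H B = 1 ∨ H B = -1) ∧
    ∀ x y : V, x ≠ y → ∑ z ∈ {x, y}ᶜ, H (insert z {x, y}) = 0

lemma isHalving_iff {v : ℕ} (h : Finset (Fin v) → ℤ) :
    isHalving v h ↔ IsBalancedSigning h ∧ ∀ B : Finset (Fin v), #B ≠ 3 → h B = 0 := by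
  have hpair : ∀ x y : Fin v, x ≠ y →
      ∑ B ∈ univ.filter (fun B : Finset (Fin v) => #B = 3 ∧ {x, y} ⊆ B), h B
        = ∑ z ∈ {x, y}ᶜ, h (insert z {x, y}) := fun x y hxy => by
    rw [← sum_filter_card_eq_card_add_one_superset, card_pair hxy]
  constructor
  · rintro ⟨⟨hzero, htrade⟩, -, hpm⟩
    exact ⟨⟨hpm, fun x y hxy => hpair x y hxy ▸ htrade _ (card_pair hxy)⟩, hzero⟩
  · rintro ⟨⟨hpm, hbal⟩, hzero⟩
    refine ⟨⟨hzero, fun P hP => ?_⟩, fun B => ?_, hpm⟩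
    · obtain ⟨x, y, hxy, rfl⟩ := card_eq_two.mp hP
      exact hpair x y hxy ▸ hbal x y hxy
    · by_cases hB : #B = 3
      · rcases hpm B hB with h1 | h1 <;> simp [h1]
      · simp [hzero B hB]

end Signings

section Necessity

variable {V : Type*} [DecidableEq V]

def linkGraph (H : Finset V → ℤ) (x : V) : SimpleGraph V where
  Adj y z := y ≠ x ∧ z ≠ x ∧ y ≠ z ∧ H {x, y, z} = 1
  symm := ⟨fun _ _ h => ⟨h.2.1, h.1, h.2.2.1.symm, by rw [pair_comm]; exact h.2.2.2⟩⟩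
  loopless := ⟨fun _ h => h.2.2.1 rfl⟩

@[simp]
lemma linkGraph_adj {H : Finset V → ℤ} {x y z : V} :
    (linkGraph H x).Adj y z ↔ y ≠ x ∧ z ≠ x ∧ y ≠ z ∧ H {x, y, z} = 1 :=
  Iff.rfl

instance (H : Finset V → ℤ) (x : V) : DecidableRel (linkGraph H x).Adj :=
  fun _ _ => by unfold linkGraph; infer_instance

variable [Fintype V]

lemma linkGraph_degree_self (H : Finset V → ℤ) (x : V) : (linkGraph H x).degree x = 0 := by
  rw [SimpleGraph.degree_eq_zero]
  exact fun _ h => (linkGraph_adj.mp h).1 rfl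

lemma IsBalancedSigning.two_mul_linkGraph_degree {H : Finset V → ℤ} (hH : IsBalancedSigning H)
    {x y : V} (hxy : x ≠ y) : 2 * (linkGraph H x).degree y = Fintype.card V - 2 := by
  have hneighbors : (linkGraph H x).neighborFinset y
      = ({x, y}ᶜ : Finset V).filter (fun z => H (insert z {x, y}) = 1) := by
    ext z
    have hxyz : insert z {x, y} = ({x, y, z} : Finset V) := by
      ext; simp only [mem_insert, mem_singleton]; tauto
    simp only [SimpleGraph.mem_neighborFinset, linkGraph_adj, mem_filter, mem_compl, mem_insert,
      mem_singleton, hxyz]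
    grind
  rw [← SimpleGraph.card_neighborFinset_eq_degree, hneighbors, two_mul_card_filter_eq_one,
    card_compl, card_pair hxy]
  · intro z hz
    exact hH.1 _ (by rw [card_insert_of_notMem (mem_compl.mp hz), card_pair hxy])
  · exact hH.2 x y hxy

lemma IsBalancedSigning.card_mod_four {H : Finset V → ℤ} (hH : IsBalancedSigning H)
    (hV : 2 ≤ Fintype.card V) : Fintype.card V % 4 = 2 := by
  obtain ⟨x, y, hxy⟩ := Fintype.one_lt_card_iff_nontrivial.mp hV |>.exists_pair_ne
  set d := (linkGraph H x).degree y
  have hd : 2 * d = Fintype.card V - 2 := hH.two_mul_linkGraph_degree hxy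
  suffices Even d by obtain ⟨k, hk⟩ := this; omega
  by_contra hodd
  have hodd_degrees : univ.filter (fun w => Odd ((linkGraph H x).degree w)) = univ.erase x := by
    ext w
    rcases eq_or_ne w x with rfl | hwx
    · simp [linkGraph_degree_self]
    · have hw := hH.two_mul_linkGraph_degree hwx.symm
      have : (linkGraph H x).degree w = d := by omega
      simp [hwx, this, Nat.not_even_iff_odd.mp hodd]
  have := (linkGraph H x).even_card_odd_degree_vertices
  rw [hodd_degrees, card_erase_of_mem (mem_univ x), card_univ] at this
  obtain ⟨k, hk⟩ := this
  omega

end Necessity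

section Construction

lemma sum_ite_apply_eq_of_bijective {α β : Type*} [Fintype α] [DecidableEq β] {g : α → β}
    (hg : g.Bijective) (s : β) (c d : ℤ) :
    ∑ t, (if g t = s then c else d) = c - d + Fintype.card α * d := by
  classical
  obtain ⟨t₀, rfl⟩ := hg.2 s
  have hsplit : ∀ t, (if g t = g t₀ then c else d) = (if t = t₀ then c - d else 0) + d :=
    fun t => by simp only [hg.1.eq_iff]; split_ifs <;> ring
  simp [hsplit, sum_add_distrib]

variable {R : Type*} [CommRing R] [DecidableEq R]

/-- Summed over a triple of points `(parity, label)`, this records the number of odd points, the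
sum of the odd labels and the sum of the even labels. -/
def oddEvenWeight (w : Bool × R) : ℕ × R × R := if w.1 then (1, w.2, 0) else (0, 0, w.2)

def signOfWeight (s : ℕ × R × R) : ℤ :=
  (-1) ^ s.1 * if (s.1 = 1 ∧ s.2.1 = s.2.2) ∨ (s.1 = 2 ∧ s.2.1 = 4 * s.2.2) then -1 else 1

def halvingSigning (B : Finset (Bool × R)) : ℤ :=
  signOfWeight (∑ w ∈ B, oddEvenWeight w)

lemma signOfWeight_eq_one_or_neg_one (s : ℕ × R × R) :
    signOfWeight s = 1 ∨ signOfWeight s = -1 := by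
  unfold signOfWeight
  rcases neg_one_pow_eq_or ℤ s.1 with h | h <;> rw [h] <;> split_ifs <;> simp

lemma halvingSigning_insert_pair {x y z : Bool × R} (hxy : x ≠ y)
    (hz : z ∉ ({x, y} : Finset (Bool × R))) :
    halvingSigning (insert z {x, y})
      = signOfWeight (oddEvenWeight z + (oddEvenWeight x + oddEvenWeight y)) := by
  rw [halvingSigning, sum_insert hz, sum_pair hxy]

variable [Fintype R]

lemma sum_compl_pair_halvingSigning {x y : Bool × R} (hxy : x ≠ y) :
    ∑ z ∈ {x, y}ᶜ, halvingSigning (insert z {x, y})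
      = ∑ t, signOfWeight (oddEvenWeight (false, t) + (oddEvenWeight x + oddEvenWeight y))
        + ∑ t, signOfWeight (oddEvenWeight (true, t) + (oddEvenWeight x + oddEvenWeight y))
        - signOfWeight (oddEvenWeight x + (oddEvenWeight x + oddEvenWeight y))
        - signOfWeight (oddEvenWeight y + (oddEvenWeight x + oddEvenWeight y)) := by
  have htotal := sum_compl_add_sum {x, y}
    fun z => signOfWeight (oddEvenWeight z + (oddEvenWeight x + oddEvenWeight y))
  rw [sum_pair hxy, Fintype.sum_prod_type, Fintype.sum_bool] at htotal
  rw [sum_congr rfl fun z hz => halvingSigning_insert_pair hxy (mem_compl.mp hz)]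
  linarith

variable (h2 : IsUnit (2 : R))
include h2

lemma isBalancedSigning_halvingSigning : IsBalancedSigning (halvingSigning (R := R)) := by
  refine ⟨fun B _ => signOfWeight_eq_one_or_neg_one _, fun x y hxy => ?_⟩
  wlog hle : x.1 ≤ y.1 generalizing x y
  · rw [pair_comm]; exact this y x hxy.symm (le_of_not_ge hle)
  rw [sum_compl_pair_halvingSigning hxy]
  obtain ⟨_ | _, a⟩ := x <;> obtain ⟨_ | _, b⟩ := y
  case true.false => exact absurd (hle rfl) Bool.false_ne_true
  all_goals simp only [oddEvenWeight, signOfWeight]; norm_num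
  case false.false =>
    have hsum := sum_ite_apply_eq_of_bijective Function.bijective_id (a + b) (1 : ℤ) (-1)
    simp only [id] at hsum
    linarith
  case false.true =>
    have hsum₁ := sum_ite_apply_eq_of_bijective (AddGroup.addRight_bijective a) b (1 : ℤ) (-1)
    have hsum₂ :=
      sum_ite_apply_eq_of_bijective (AddGroup.addRight_bijective b) (4 * a) (-1 : ℤ) 1
    have hdouble : b + b = 4 * a ↔ a + a = b := by
      rw [← two_mul, show 4 * a = 2 * (a + a) by ring, h2.mul_right_inj, eq_comm]
    simp_rw [eq_comm (a := b), hdouble]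
    rw [hsum₁, hsum₂]
    split_ifs <;> ring
  case true.true =>
    have h4 : IsUnit (4 : R) := by rw [show (4 : R) = 2 * 2 by norm_num]; exact h2.mul h2
    have hsum := sum_ite_apply_eq_of_bijective (IsUnit.isUnit_iff_mulLeft_bijective.mp h4)
      (a + b) (-1 : ℤ) 1
    simp_rw [eq_comm (a := a + b)]
    linarith

end Construction

lemma exists_isHalving_of_isBalancedSigning {V : Type*} [Fintype V] [DecidableEq V]
    {H : Finset V → ℤ} (hH : IsBalancedSigning H) {v : ℕ} (hV : Fintype.card V = v) :
    ∃ h, isHalving v h := by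
  let e : Fin v ≃ V := (Fintype.equivFinOfCardEq hV).symm
  refine ⟨fun B => if #B = 3 then H (B.map e.toEmbedding) else 0,
    (isHalving_iff _).mpr ⟨⟨?_, fun x y hxy => ?_⟩, ?_⟩⟩
  · intro B hB
    simpa [hB] using hH.1 (B.map e.toEmbedding) (by rwa [card_map])
  · refine (sum_equiv e (fun z => by simp [e.injective.eq_iff]) fun z hz => ?_).trans
      (hH.2 (e x) (e y) (e.injective.ne hxy))
    have hcard : #(insert z {x, y}) = 3 := by
      rw [card_insert_of_notMem (mem_compl.mp hz), card_pair hxy]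
    simp [hcard]
  · intro B hB
    simp [hB]

/-- For every `v ≥ 6`, a `(2,3,v)`-halving exists iff `v ≡ 2 (mod 4)`. -/
theorem halving_exists_iff (v : ℕ) (hv : 6 ≤ v) :
    (∃ h : Finset (Fin v) → ℤ, isHalving v h) ↔ v % 4 = 2 := by
  constructor
  · rintro ⟨h, hh⟩
    simpa using ((isHalving_iff h).mp hh).1.card_mod_four (by rw [Fintype.card_fin]; omega)
  · intro hv4
    obtain ⟨m, rfl⟩ : ∃ m, v = 2 * m := ⟨v / 2, by omega⟩
    have hm : Odd m := Nat.odd_iff.mpr (by omega)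
    have : NeZero m := ⟨hm.pos.ne'⟩
    have h2 : IsUnit (2 : ZMod m) := by
      exact_mod_cast (ZMod.isUnit_iff_coprime 2 m).mpr (Nat.coprime_two_left.mpr hm)
    exact exists_isHalving_of_isBalancedSigning (isBalancedSigning_halvingSigning h2) (by simp)
end

section
/- Let v ≥ 6 and let a0, a1, a2, b0, b1, b2 be six pairwise distinct elements of Fin v. Then 𝒯 = (a0 a1 a2 ; b0 b1 b2) + (a0 a1 a2 ; b1 b2 b0) - (a0 a1 a2 ; b2 b0 b1) (a signed sum of three minimal trades) is a simple T(2,3,v) trade of volume 10, and its support is exactly the set of all twenty 3-element subsets of {a0, a1, a2, b0, b1, b2}. -/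
/-!
Since `Sum.elim a b` is injective, `Fin.append a b` embeds `Fin (3 + 3)` into `Fin v`, sending the
standard points `castAdd 3 i`, `natAdd 3 i` to `a i`, `b i`. Pushing a function on subsets forward
along an embedding commutes with forming minimal trades and preserves being a (simple) trade, the
volume and the support. So `𝒯` is the pushforward of the same signed sum on six points, where all
claims are a finite computation.
-/

namespace Trade

variable {m n : ℕ}

def pushforward (g : Fin m ↪ Fin n) (f : Finset (Fin m) → ℤ) (X : Finset (Fin n)) : ℤ :=
  ∑ S : Finset (Fin m), if S.map g = X then f S else 0

variable (g : Fin m ↪ Fin n) (f : Finset (Fin m) → ℤ)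

@[simp]
theorem pushforward_map (S : Finset (Fin m)) : pushforward g f (S.map g) = f S := by
  simp [pushforward, Finset.map_inj]

theorem pushforward_eq_zero {X : Finset (Fin n)} (hX : ∀ S : Finset (Fin m), S.map g ≠ X) :
    pushforward g f X = 0 :=
  Finset.sum_eq_zero fun S _ => if_neg (hX S)

theorem sum_pushforward (s : Finset (Finset (Fin n))) :
    ∑ X ∈ s, pushforward g f X = ∑ S with S.map g ∈ s, f S := by
  simp only [pushforward]
  rw [Finset.sum_comm, Finset.sum_filter]
  exact Finset.sum_congr rfl fun S _ => Finset.sum_ite_eq s _ fun _ => f S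

theorem eq_pushforward {F : Finset (Fin n) → ℤ} (hmap : ∀ S, F (S.map g) = f S)
    (hzero : ∀ X, (∀ S : Finset (Fin m), S.map g ≠ X) → F X = 0) : F = pushforward g f := by
  funext X
  by_cases hX : ∃ S : Finset (Fin m), S.map g = X
  · obtain ⟨S, rfl⟩ := hX
    rw [hmap, pushforward_map]
  · push Not at hX
    rw [hzero X hX, pushforward_eq_zero g f hX]

theorem comp_pushforward (φ : ℤ → ℤ) (hφ : φ 0 = 0) :
    φ ∘ pushforward g f = pushforward g (φ ∘ f) :=
  eq_pushforward g _ (fun S => by simp) fun X hX => by simp [pushforward_eq_zero g f hX, hφ]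

theorem pushforward_add_sub (f₁ f₂ f₃ : Finset (Fin m) → ℤ) :
    (fun X => pushforward g f₁ X + pushforward g f₂ X - pushforward g f₃ X) =
      pushforward g (fun S => f₁ S + f₂ S - f₃ S) :=
  eq_pushforward g _ (fun S => by simp) fun X hX => by simp [pushforward_eq_zero _ _ hX]

theorem pushforward_cases (X : Finset (Fin n)) :
    (∃ S : Finset (Fin m), S.map g = X ∧ pushforward g f X = f S) ∨ pushforward g f X = 0 := by
  by_cases hX : ∃ S : Finset (Fin m), S.map g = X
  · obtain ⟨S, rfl⟩ := hX
    exact Or.inl ⟨S, rfl, pushforward_map g f S⟩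
  · push Not at hX
    exact Or.inr (pushforward_eq_zero g f hX)

theorem isTrade_pushforward (hf : isTrade m f) : isTrade n (pushforward g f) := by
  refine ⟨fun X hX => ?_, fun P hP => ?_⟩
  · obtain ⟨S, rfl, hS⟩ | h0 := pushforward_cases g f X
    · rw [hS, hf.1 S (by simpa using hX)]
    · exact h0
  · rw [sum_pushforward]
    by_cases hPS : ∃ Q : Finset (Fin m), Q.map g = P
    · obtain ⟨Q, rfl⟩ := hPS
      simpa [Finset.card_map] using hf.2 Q (by simpa using hP)
    · refine Finset.sum_eq_zero fun S hS => absurd ?_ hPS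
      obtain ⟨Q, -, hQ⟩ := Finset.subset_map_iff.mp
        (Finset.mem_filter.mp (Finset.mem_filter.mp hS).2).2.2
      exact ⟨Q, hQ.symm⟩

theorem isSimple_pushforward (hf : isSimple m f) : isSimple n (pushforward g f) := by
  intro X
  obtain ⟨S, -, hS⟩ | h0 := pushforward_cases g f X
  · rw [hS]; exact hf S
  · simp [h0]

theorem volume_pushforward : volume n (pushforward g f) = volume m f := by
  have h := congrFun (comp_pushforward g f (max · 0) (max_self 0))
  simp only [Function.comp_apply] at h
  simp only [volume, h, sum_pushforward, Finset.mem_univ, Finset.filter_true,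
    Function.comp_apply]

theorem support_pushforward :
    {X | pushforward g f X ≠ 0} = (Finset.map g) '' {S | f S ≠ 0} := by
  ext X
  constructor
  · intro hX
    obtain ⟨S, rfl, hS⟩ | h0 := pushforward_cases g f X
    · exact ⟨S, by simpa [hS] using hX, rfl⟩
    · exact absurd h0 hX
  · rintro ⟨S, hS, rfl⟩
    simpa using hS

end Trade

theorem minimalTrade_map {m n : ℕ} (g : Fin m ↪ Fin n) (a b : Fin 3 → Fin m) :
    minimalTrade n (g ∘ a) (g ∘ b) = Trade.pushforward g (minimalTrade m a b) := by
  have himage (s : Fin 3 → Bool) :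
      Finset.univ.image (fun i => if s i then (g ∘ b) i else (g ∘ a) i) =
        (Finset.univ.image fun i => if s i then b i else a i).map g := by
    rw [Finset.map_eq_image, Finset.image_image]
    congr 1
    funext i
    by_cases h : s i <;> simp [h]
  refine Trade.eq_pushforward g _ (fun S => ?_) fun X hX => ?_ <;>
    simp only [minimalTrade, himage]
  · simp only [Finset.map_inj]
  · exact Finset.sum_eq_zero fun s _ => by rw [if_neg (hX _).symm, mul_zero]

def v10Trade (v : ℕ) (a b : Fin 3 → Fin v) : Finset (Fin v) → ℤ :=
  fun B => minimalTrade v a b B + minimalTrade v a (fun k => b (k + 1)) B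
    - minimalTrade v a (fun k => b (k + 2)) B

theorem v10Trade_map {m n : ℕ} (g : Fin m ↪ Fin n) (a b : Fin 3 → Fin m) :
    v10Trade n (g ∘ a) (g ∘ b) = Trade.pushforward g (v10Trade m a b) := by
  calc v10Trade n (g ∘ a) (g ∘ b)
      = fun X => Trade.pushforward g (minimalTrade m a b) X
          + Trade.pushforward g (minimalTrade m a fun k => b (k + 1)) X
          - Trade.pushforward g (minimalTrade m a fun k => b (k + 2)) X := by
        simp only [← minimalTrade_map]; rfl
    _ = _ := Trade.pushforward_add_sub g _ _ _

def v10Model : Finset (Fin (3 + 3)) → ℤ := v10Trade (3 + 3) (Fin.castAdd 3) (Fin.natAdd 3)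

theorem isTrade_v10Model : isTrade (3 + 3) v10Model := by unfold isTrade; decide

theorem isSimple_v10Model : isSimple (3 + 3) v10Model := by unfold isSimple; decide

set_option maxRecDepth 10000 in
theorem volume_v10Model : volume (3 + 3) v10Model = 10 := by unfold volume; decide

theorem support_v10Model : {S | v10Model S ≠ 0} = {S : Finset (Fin (3 + 3)) | S.card = 3} := by
  ext S; revert S; decide

theorem Finset.map_image_setOf_card {α β : Type*} [Fintype α] [DecidableEq β] (g : α ↪ β) (k : ℕ) :
    Finset.map g '' {S | S.card = k} = {X | X.card = k ∧ X ⊆ Finset.univ.map g} := by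
  ext X
  constructor
  · rintro ⟨S, hS, rfl⟩
    exact ⟨by simpa using hS, Finset.map_subset_map.mpr S.subset_univ⟩
  · rintro ⟨hX, hXg⟩
    obtain ⟨S, -, rfl⟩ := Finset.subset_map_iff.mp hXg
    exact ⟨S, by simpa using hX, rfl⟩

theorem V10_trade_general (v : ℕ) (a b : Fin 3 → Fin v)
    (hab : Function.Injective (Sum.elim a b))
    (𝒯 : Finset (Fin v) → ℤ)
    (h𝒯 : 𝒯 = fun B => minimalTrade v a b B + minimalTrade v a (fun k => b (k + 1)) B
      - minimalTrade v a (fun k => b (k + 2)) B) :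
    isTrade v 𝒯 ∧ isSimple v 𝒯 ∧ volume v 𝒯 = 10 ∧
      {B : Finset (Fin v) | 𝒯 B ≠ 0} =
        {B : Finset (Fin v) | B.card = 3 ∧ B ⊆ {a 0, a 1, a 2, b 0, b 1, b 2}} := by
  let g : Fin (3 + 3) ↪ Fin v :=
    ⟨Fin.append a b, Fin.append_injective_iff.mpr (Sum.elim_injective.mp hab)⟩
  have hg : 𝒯 = Trade.pushforward g v10Model := by
    have ha : g ∘ Fin.castAdd 3 = a := funext fun i => Fin.append_left a b i
    have hb : g ∘ Fin.natAdd 3 = b := funext fun i => Fin.append_right a b i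
    rw [h𝒯, v10Model, ← v10Trade_map, ha, hb]
    rfl
  have hrange : Finset.univ.map g = {a 0, a 1, a 2, b 0, b 1, b 2} := by
    ext x
    simp [g, Fin.exists_fin_succ, eq_comm, Fin.append, Fin.addCases]
  subst hg
  refine ⟨Trade.isTrade_pushforward g _ isTrade_v10Model,
    Trade.isSimple_pushforward g _ isSimple_v10Model,
    (Trade.volume_pushforward g _).trans volume_v10Model, ?_⟩
  rw [Trade.support_pushforward, support_v10Model, Finset.map_image_setOf_card, hrange]

/-- For `v ≥ 6` and six pairwise distinct points `a₀,a₁,a₂,b₀,b₁,b₂`, the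
signed sum `𝒯 = (a₀a₁a₂ ; b₀b₁b₂) + (a₀a₁a₂ ; b₁b₂b₀) - (a₀a₁a₂ ; b₂b₀b₁)` is a simple
`T(2,3,v)` trade of volume 10, with support exactly the twenty 3-subsets of
`{a₀,a₁,a₂,b₀,b₁,b₂}`. -/
theorem V10_trade (v : ℕ) (hv : 6 ≤ v) (a b : Fin 3 → Fin v)
    (hab : Function.Injective (Sum.elim a b))
    (𝒯 : Finset (Fin v) → ℤ)
    (h𝒯 : 𝒯 = fun B => minimalTrade v a b B + minimalTrade v a (fun k => b (k + 1)) B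
      - minimalTrade v a (fun k => b (k + 2)) B) :
    isTrade v 𝒯 ∧ isSimple v 𝒯 ∧ volume v 𝒯 = 10 ∧
      {B : Finset (Fin v) | 𝒯 B ≠ 0} =
        {B : Finset (Fin v) | B.card = 3 ∧ B ⊆ {a 0, a 1, a 2, b 0, b 1, b 2}} :=
  V10_trade_general v a b hab 𝒯 h𝒯
end
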